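/- arXiv:2210.13176 — 2 statements merged into one kernel-verified Lean document; each statement's English description precedes it below -/
import Mathlib

section
/- A subset M of a Banach subspace X of B(Ω,Y) is relatively compact (in supremum norm) if and only if M is bounded, extendedly equicontinuous (ω_X(M) = 0), and pointwise relatively compact (M(x) is relatively compact in Y for each x ∈ Ω). -/
open Metric Set BoundedContinuousFunction

/-- Kuratowski measure of noncompactness: infimum of all `ε > 0` such that the set can be
covered by finitely many sets of diameter at most `ε`. -/
noncomputable def kurMNC {E : Type*} [PseudoMetricSpace E] (A : Set E) : ℝ :=
  sInf {ε : ℝ | 0 < ε ∧ ∃ (n : ℕ) (C : Fin n → Set E),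
    A ⊆ ⋃ i, C i ∧ ∀ i, Metric.diam (C i) ≤ ε}

/-- Hausdorff measure of noncompactness with centers of the `ε`-net restricted to `S`. -/
noncomputable def hausMNCin {E : Type*} [PseudoMetricSpace E] (S A : Set E) : ℝ :=
  sInf {ε : ℝ | 0 < ε ∧ ∃ F : Set E, F.Finite ∧ F ⊆ S ∧
    A ⊆ ⋃ y ∈ F, Metric.closedBall y ε}

/-- Hausdorff measure of noncompactness: infimum of all `ε > 0` such that the set admits a
finite `ε`-net in the whole space. -/
noncomputable def hausMNC {E : Type*} [PseudoMetricSpace E] (A : Set E) : ℝ :=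
  hausMNCin Set.univ A

/-- A finite partition of `Ω` (indexed by `Fin n`). -/
def IsPartition {Ω : Type*} {n : ℕ} (A : Fin n → Set Ω) : Prop :=
  (⋃ i, A i) = Set.univ ∧ Pairwise (Function.onFun Disjoint A)

section Defs

variable {Ω Y : Type*} [TopologicalSpace Ω] [NormedAddCommGroup Y]

/-- `M(x) = {f x : f ∈ M}`. -/
def evalSet (M : Set (Ω →ᵇ Y)) (x : Ω) : Set Y := (fun f : Ω →ᵇ Y => f x) '' M

/-- `M(Ω) = {f x : f ∈ M, x ∈ Ω}`. -/
def rangeSet (M : Set (Ω →ᵇ Y)) : Set Y := ⋃ f ∈ M, Set.range (f : Ω → Y)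

/-- `μ_α(M) = sup_{x ∈ Ω} α(M(x))`. -/
noncomputable def muAlpha (M : Set (Ω →ᵇ Y)) : ℝ := ⨆ x : Ω, kurMNC (evalSet M x)

/-- `μ_γ(M) = sup_{x ∈ Ω} γ(M(x))`. -/
noncomputable def muGamma (M : Set (Ω →ᵇ Y)) : ℝ := ⨆ x : Ω, hausMNC (evalSet M x)

/-- `ω(M)`: infimum of `ε > 0` admitting a finite partition `{A_1, …, A_n}` of `Ω` with
`diam (f '' A i) ≤ ε` for all `f ∈ M` and all `i`. -/
noncomputable def omegaPlain (M : Set (Ω →ᵇ Y)) : ℝ :=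
  sInf {ε : ℝ | 0 < ε ∧ ∃ (n : ℕ) (A : Fin n → Set Ω), IsPartition A ∧
    ∀ f ∈ M, ∀ i, Metric.diam ((f : Ω → Y) '' A i) ≤ ε}

/-- `ω_X(M)`: infimum of `ε > 0` admitting a finite partition `{A_1, …, A_n}` of `Ω` and a
finite set `{φ_1, …, φ_m} ⊆ X` such that every `f ∈ M` has some `j` with
`diam ((f - φ j) '' A i) ≤ ε` for all `i`. -/
noncomputable def omegaX (X : Set (Ω →ᵇ Y)) (M : Set (Ω →ᵇ Y)) : ℝ :=
  sInf {ε : ℝ | 0 < ε ∧ ∃ (n : ℕ) (A : Fin n → Set Ω), IsPartition A ∧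
    ∃ (m : ℕ) (φ : Fin m → (Ω →ᵇ Y)), (∀ j, φ j ∈ X) ∧
      ∀ f ∈ M, ∃ j, ∀ i, Metric.diam ((⇑(f - φ j) : Ω → Y) '' A i) ≤ ε}

end Defs

/-!
In the complete space `Ω →ᵇ Y`, relative compactness is total boundedness. A finite `ε`-net
`{φ_j} ⊆ M ⊆ X` together with the trivial partition witnesses `ω_X(M) ≤ 2ε`, and evaluation at a
point is `1`-Lipschitz, so total boundedness gives the three conditions. Conversely, given a
partition `{A_i}` and `{φ_j}` witnessing `ω_X(M) ≤ δ`, pick a point `x_i` in each nonempty `A_i`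
and finite `δ`-nets of the sets `M(x_i)`. Two functions of `M` sharing the same `φ_j` and the same
net points at every `x_i` are `4δ`-close uniformly, since on `A_i` both differ from `φ_j` by
something of oscillation at most `δ`. This finite coding makes `M` totally bounded.
-/

theorem isCompact_closure_iff_totallyBounded {α : Type*} [UniformSpace α] [CompleteSpace α]
    {s : Set α} : IsCompact (closure s) ↔ TotallyBounded s := by
  rw [isCompact_iff_totallyBounded_isComplete, totallyBounded_closure]
  exact and_iff_left isClosed_closure.isComplete

lemma isPartition_const_univ (Ω : Type*) : IsPartition (fun _ : Fin 1 => (univ : Set Ω)) :=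
  ⟨iUnion_const _, fun i j hij => (hij (Subsingleton.elim i j)).elim⟩

section

variable {Ω Y : Type*} [TopologicalSpace Ω] [NormedAddCommGroup Y]

def OmegaXAdmissible (X M : Set (Ω →ᵇ Y)) (ε : ℝ) : Prop :=
  ∃ (n : ℕ) (A : Fin n → Set Ω), IsPartition A ∧
    ∃ (m : ℕ) (φ : Fin m → (Ω →ᵇ Y)), (∀ j, φ j ∈ X) ∧
      ∀ f ∈ M, ∃ j, ∀ i, diam ((⇑(f - φ j) : Ω → Y) '' A i) ≤ ε

lemma omegaX_eq_sInf (X M : Set (Ω →ᵇ Y)) :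
    omegaX X M = sInf {ε | 0 < ε ∧ OmegaXAdmissible X M ε} :=
  rfl

lemma OmegaXAdmissible.mono {X M : Set (Ω →ᵇ Y)} {δ ε : ℝ} (h : OmegaXAdmissible X M δ)
    (hδε : δ ≤ ε) : OmegaXAdmissible X M ε := by
  obtain ⟨n, A, hA, m, φ, hφX, hφ⟩ := h
  exact ⟨n, A, hA, m, φ, hφX, fun f hf => (hφ f hf).imp fun _ hj i => (hj i).trans hδε⟩

-- `h` rules out the junk value `sInf ∅ = 0`.
lemma omegaX_eq_zero_iff {X M : Set (Ω →ᵇ Y)} (h : ∃ ε, OmegaXAdmissible X M ε) :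
    omegaX X M = 0 ↔ ∀ ε > 0, OmegaXAdmissible X M ε := by
  rw [omegaX_eq_sInf]
  constructor
  · intro h0 ε hε
    obtain ⟨ε₀, hε₀⟩ := h
    have hne : {ε | 0 < ε ∧ OmegaXAdmissible X M ε}.Nonempty :=
      ⟨max ε₀ 1, by positivity, hε₀.mono (le_max_left _ _)⟩
    obtain ⟨δ, ⟨-, hδ⟩, hδε⟩ := exists_lt_of_csInf_lt hne (h0 ▸ hε)
    exact hδ.mono hδε.le
  · intro hall
    have hIoi : {ε | 0 < ε ∧ OmegaXAdmissible X M ε} = Ioi 0 :=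
      Set.ext fun ε => ⟨And.left, fun hε => ⟨hε, hall ε hε⟩⟩
    rw [hIoi, csInf_Ioi]

lemma diam_image_sub_le (f g : Ω →ᵇ Y) (s : Set Ω) :
    diam ((⇑(f - g) : Ω → Y) '' s) ≤ 2 * dist f g := by
  refine diam_le_of_forall_dist_le (by positivity) ?_
  rintro _ ⟨a, -, rfl⟩ _ ⟨b, -, rfl⟩
  calc dist ((f - g) a) ((f - g) b) ≤ ‖(f - g) a‖ + ‖(f - g) b‖ := dist_le_norm_add_norm _ _
    _ ≤ ‖f - g‖ + ‖f - g‖ := add_le_add (norm_coe_le_norm _ a) (norm_coe_le_norm _ b)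
    _ = 2 * dist f g := by rw [dist_eq_norm]; ring

lemma exists_omegaXAdmissible_of_isBounded {X M : Set (Ω →ᵇ Y)} (h0 : 0 ∈ X)
    (hM : Bornology.IsBounded M) : ∃ ε, OmegaXAdmissible X M ε := by
  obtain ⟨r, hr⟩ := (isBounded_iff_subset_closedBall 0).1 hM
  refine ⟨2 * r, 1, fun _ => univ, isPartition_const_univ Ω, 1, fun _ => 0, fun _ => h0,
    fun f hf => ⟨0, fun _ => (diam_image_sub_le f 0 univ).trans ?_⟩⟩
  exact mul_le_mul_of_nonneg_left (hr hf) zero_le_two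

lemma TotallyBounded.omegaXAdmissible {X M : Set (Ω →ᵇ Y)} (hMX : M ⊆ X)
    (hM : TotallyBounded M) {ε : ℝ} (hε : 0 < ε) : OmegaXAdmissible X M ε := by
  obtain ⟨t, htM, htfin, hcov⟩ := finite_approx_of_totallyBounded hM (ε / 2) (by positivity)
  obtain ⟨m, φ, -, rfl⟩ := htfin.fin_param
  refine ⟨1, fun _ => univ, isPartition_const_univ Ω, m, φ, fun j => hMX (htM ⟨j, rfl⟩),
    fun f hf => ?_⟩
  obtain ⟨_, ⟨j, rfl⟩, hfj⟩ := mem_iUnion₂.1 (hcov hf)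
  refine ⟨j, fun _ => (diam_image_sub_le f (φ j) univ).trans ?_⟩
  linarith [mem_ball.1 hfj]

lemma dist_apply_le_of_diam_image_sub_le {f g φ : Ω →ᵇ Y} {s : Set Ω} {δ : ℝ}
    (hf : diam ((⇑(f - φ) : Ω → Y) '' s) ≤ δ) (hg : diam ((⇑(g - φ) : Ω → Y) '' s) ≤ δ)
    {a z : Ω} (ha : a ∈ s) (hz : z ∈ s) : dist (f z) (g z) ≤ dist (f a) (g a) + 2 * δ := by
  have hosc : ∀ h : Ω →ᵇ Y, diam (⇑h '' s) ≤ δ → ‖h z - h a‖ ≤ δ := fun h hh => by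
    rw [← dist_eq_norm]
    exact (dist_le_diam_of_mem (h.isBounded_range.subset (image_subset_range _ _))
      (mem_image_of_mem _ hz) (mem_image_of_mem _ ha)).trans hh
  have hf' := hosc _ hf
  have hg' := hosc _ hg
  simp only [coe_sub, Pi.sub_apply] at hf' hg'
  rw [dist_eq_norm, dist_eq_norm]
  calc ‖f z - g z‖
      = ‖(f z - φ z - (f a - φ a)) + (f a - g a) - (g z - φ z - (g a - φ a))‖ := by
        congr 1; abel
    _ ≤ ‖f z - φ z - (f a - φ a)‖ + ‖f a - g a‖ + ‖g z - φ z - (g a - φ a)‖ :=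
        norm_sub_le_of_le (norm_add_le _ _) le_rfl
    _ ≤ ‖f a - g a‖ + 2 * δ := by linarith

lemma totallyBounded_of_omegaXAdmissible {X M : Set (Ω →ᵇ Y)}
    (hadm : ∀ ε > 0, OmegaXAdmissible X M ε) (hpt : ∀ x, TotallyBounded (evalSet M x)) :
    TotallyBounded M := by
  refine totallyBounded_of_finite_discretization fun ε hε => ?_
  obtain ⟨n, A, ⟨hAcov, -⟩, m, φ, -, hφ⟩ := hadm (ε / 5) (by positivity)
  choose j hj using fun f : M => hφ f f.2
  let I := {i // (A i).Nonempty}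
  let x : I → Ω := fun i => i.2.some
  choose t _ htfin hcov using fun i : I =>
    finite_approx_of_totallyBounded (hpt (x i)) (ε / 5) (by positivity)
  have hnet : ∀ (f : M) (i : I), ∃ y : t i, dist (f.1 (x i)) y < ε / 5 := fun f i => by
    obtain ⟨y, hy, hfy⟩ := mem_iUnion₂.1 (hcov i (mem_image_of_mem _ f.2))
    exact ⟨⟨y, hy⟩, hfy⟩
  choose v hv using hnet
  have : ∀ i, Finite (t i) := fun i => (htfin i).to_subtype
  refine ⟨ULift (Fin m × ((i : I) → t i)), Fintype.ofFinite _, fun f => ULift.up (j f, v f),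
    fun f g hfg => ?_⟩
  obtain ⟨hjfg, hvfg⟩ := Prod.mk.inj (ULift.up_inj.1 hfg)
  refine lt_of_le_of_lt ((dist_le (by positivity)).2 fun z => ?_) (by linarith : 4 * (ε / 5) < ε)
  obtain ⟨i, hzi⟩ := mem_iUnion.1 (hAcov.superset (mem_univ z))
  let i' : I := ⟨i, z, hzi⟩
  have hnear : dist (f.1 (x i')) (g.1 (x i')) < 2 * (ε / 5) := by
    have hvg := hv g i'
    rw [← hvfg, dist_comm] at hvg
    linarith [hv f i', dist_triangle (f.1 (x i')) (v f i' : Y) (g.1 (x i'))]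
  have hosc := dist_apply_le_of_diam_image_sub_le (hj f i) (hjfg ▸ hj g i) i'.2.some_mem hzi
  linarith

end

theorem stmt12_general {Ω Y : Type*} [TopologicalSpace Ω]
    [NormedAddCommGroup Y] [NormedSpace ℝ Y] [CompleteSpace Y]
    (X : Submodule ℝ (Ω →ᵇ Y))
    (M : Set (Ω →ᵇ Y)) (hMX : M ⊆ (X : Set (Ω →ᵇ Y))) :
    IsCompact (closure M) ↔
      (Bornology.IsBounded M ∧ omegaX (X : Set (Ω →ᵇ Y)) M = 0 ∧
        ∀ x : Ω, IsCompact (closure (evalSet M x))) := by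
  simp only [isCompact_closure_iff_totallyBounded]
  constructor
  · intro hM
    refine ⟨hM.isBounded, ?_, fun x => hM.image (lipschitz_eval_const x).uniformContinuous⟩
    exact (omegaX_eq_zero_iff ⟨1, hM.omegaXAdmissible hMX one_pos⟩).2
      fun ε hε => hM.omegaXAdmissible hMX hε
  · rintro ⟨hbdd, hω, hpt⟩
    have hadm := exists_omegaXAdmissible_of_isBounded X.zero_mem hbdd
    exact totallyBounded_of_omegaXAdmissible ((omegaX_eq_zero_iff hadm).1 hω) hpt

theorem stmt12 {Ω Y : Type*} [TopologicalSpace Ω] [DiscreteTopology Ω] [Nonempty Ω]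
    [NormedAddCommGroup Y] [NormedSpace ℝ Y] [CompleteSpace Y]
    (X : Submodule ℝ (Ω →ᵇ Y)) (hX : IsClosed (X : Set (Ω →ᵇ Y)))
    (M : Set (Ω →ᵇ Y)) (hMX : M ⊆ (X : Set (Ω →ᵇ Y))) :
    IsCompact (closure M) ↔
      (Bornology.IsBounded M ∧ omegaX (X : Set (Ω →ᵇ Y)) M = 0 ∧
        ∀ x : Ω, IsCompact (closure (evalSet M x))) :=
  stmt12_general X M hMX
end

section
/- For any bounded subset M of a Banach subspace X of B(Ω,Y), max{μ_γ(M), (1/2) ω_X(M)} ≤ γ_X(M) ≤ 2(μ_γ(M) + ω_X(M)), where γ_X is the Hausdorff measure of noncompactness in X. -/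
/-!
Evaluating a finite `ε`-net of `M` at a point `x` gives an `ε`-net of `M(x)`, and taking a
single piece of `Ω` with the centres of the net as the `φ_j` shows `ω_X(M) ≤ 2ε`; this gives the
lower bound. For the upper bound, moving the centres of a net into `M ⊆ X` costs a factor `2`,
so it suffices to bound the Hausdorff measure in the whole space by `μ_γ(M) + ε₂` whenever a
partition `{A_i}` and functions `φ_j` witness `ω_X(M) ≤ ε₂`. Pick a point `p_i` in each piece and
a finite `ε₁`-net of each `M(p_i)`, `ε₁ > μ_γ(M)`. If `f - φ_j` oscillates by at most `ε₂` on every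
piece and `y_i` is within `ε₁` of `f(p_i)`, then `f` is within `ε₁ + ε₂` of the function equal to
`φ_j + y_i - φ_j(p_i)` on `A_i`, and there are finitely many such functions.
-/

open Metric Set BoundedContinuousFunction

section HausdorffMNC

variable {E : Type*} [PseudoMetricSpace E]

/-- The radii whose infimum is `hausMNCin S A`. -/
def hausRadii (S A : Set E) : Set ℝ :=
  {ε : ℝ | 0 < ε ∧ ∃ F : Set E, F.Finite ∧ F ⊆ S ∧ A ⊆ ⋃ y ∈ F, closedBall y ε}

lemma hausMNCin_nonneg (S A : Set E) : 0 ≤ hausMNCin S A :=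
  Real.sInf_nonneg fun _ hε => hε.1.le

lemma hausMNCin_le_of_mem {S A : Set E} {ε : ℝ} (hε : ε ∈ hausRadii S A) : hausMNCin S A ≤ ε :=
  csInf_le ⟨0, fun _ hδ => hδ.1.le⟩ hε

lemma hausRadii_nonempty {S A : Set E} (hAS : A ⊆ S) (hA : Bornology.IsBounded A) :
    (hausRadii S A).Nonempty := by
  rcases A.eq_empty_or_nonempty with rfl | ⟨a, ha⟩
  · exact ⟨1, one_pos, ∅, finite_empty, empty_subset _, empty_subset _⟩
  · obtain ⟨r, hr⟩ := hA.subset_closedBall a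
    refine ⟨max r 1, by positivity, {a}, finite_singleton a, singleton_subset_iff.2 (hAS ha), ?_⟩
    rw [biUnion_singleton]
    exact hr.trans (closedBall_subset_closedBall (le_max_left r 1))

lemma mem_hausRadii_of_hausMNCin_lt {S A : Set E} (hne : (hausRadii S A).Nonempty) {ε : ℝ}
    (h : hausMNCin S A < ε) : ε ∈ hausRadii S A := by
  obtain ⟨δ, ⟨hδ, F, hF, hFS, hcov⟩, hδε⟩ := exists_lt_of_csInf_lt hne h
  exact ⟨hδ.trans hδε, F, hF, hFS,
    hcov.trans (iUnion₂_mono fun y _ => closedBall_subset_closedBall hδε.le)⟩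

lemma two_mul_mem_hausRadii_self {S A : Set E} {ε : ℝ} (hε : ε ∈ hausRadii S A) :
    2 * ε ∈ hausRadii A A := by
  obtain ⟨hε0, F, hF, -, hcov⟩ := hε
  let G := {y ∈ F | (A ∩ closedBall y ε).Nonempty}
  have : Finite G := (hF.subset (sep_subset _ _)).to_subtype
  choose z hz using fun y : G => y.2.2
  refine ⟨by positivity, range z, finite_range z, range_subset_iff.2 fun y => (hz y).1, ?_⟩
  intro a ha
  obtain ⟨y, hyF, hay⟩ := mem_iUnion₂.1 (hcov ha)
  let y' : G := ⟨y, hyF, a, ha, hay⟩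
  refine mem_iUnion₂.2 ⟨z y', mem_range_self y', ?_⟩
  calc dist a (z y') ≤ dist a y + dist (z y') y := dist_triangle_right _ _ _
    _ ≤ ε + ε := add_le_add (mem_closedBall.1 hay) (mem_closedBall.1 (hz y').2)
    _ = 2 * ε := by ring

lemma hausMNCin_le_two_mul_hausMNC {S A : Set E} (hAS : A ⊆ S) (hA : Bornology.IsBounded A) :
    hausMNCin S A ≤ 2 * hausMNC A := by
  have : hausMNCin S A / 2 ≤ hausMNC A :=
    le_csInf (hausRadii_nonempty (subset_univ A) hA) fun ε hε => by
      obtain ⟨hε0, F, hF, hFA, hcov⟩ := two_mul_mem_hausRadii_self hε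
      linarith [hausMNCin_le_of_mem ⟨hε0, F, hF, hFA.trans hAS, hcov⟩]
  linarith

end HausdorffMNC

lemma isPartition_univ {Ω : Type*} : IsPartition (fun _ : Fin 1 => (univ : Set Ω)) :=
  ⟨iUnion_const univ, Subsingleton.pairwise⟩

section FunctionSpace

variable {Ω Y : Type*} [TopologicalSpace Ω] [NormedAddCommGroup Y]

/-- The radii whose infimum is `omegaX X M`. -/
def omegaXRadii (X M : Set (Ω →ᵇ Y)) : Set ℝ :=
  {ε : ℝ | 0 < ε ∧ ∃ (n : ℕ) (A : Fin n → Set Ω), IsPartition A ∧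
    ∃ (m : ℕ) (φ : Fin m → (Ω →ᵇ Y)), (∀ j, φ j ∈ X) ∧
      ∀ f ∈ M, ∃ j, ∀ i, diam ((⇑(f - φ j) : Ω → Y) '' A i) ≤ ε}

lemma isBounded_evalSet {M : Set (Ω →ᵇ Y)} (hM : Bornology.IsBounded M) (x : Ω) :
    Bornology.IsBounded (evalSet M x) :=
  (lipschitz_eval_const x).isBounded_image hM

lemma mem_hausRadii_evalSet {S M : Set (Ω →ᵇ Y)} {ε : ℝ} (hε : ε ∈ hausRadii S M) (x : Ω) :
    ε ∈ hausRadii univ (evalSet M x) := by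
  obtain ⟨hε0, F, hF, -, hcov⟩ := hε
  refine ⟨hε0, (fun g : Ω →ᵇ Y => g x) '' F, hF.image _, subset_univ _, ?_⟩
  rintro - ⟨f, hf, rfl⟩
  obtain ⟨g, hgF, hfg⟩ := mem_iUnion₂.1 (hcov hf)
  exact mem_iUnion₂.2 ⟨g x, mem_image_of_mem _ hgF, (dist_coe_le_dist x).trans hfg⟩

lemma hausMNC_evalSet_le_hausMNCin {S M : Set (Ω →ᵇ Y)} (hMS : M ⊆ S)
    (hM : Bornology.IsBounded M) (x : Ω) : hausMNC (evalSet M x) ≤ hausMNCin S M :=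
  le_csInf (hausRadii_nonempty hMS hM) fun _ hε =>
    hausMNCin_le_of_mem (mem_hausRadii_evalSet hε x)

lemma muGamma_nonneg (M : Set (Ω →ᵇ Y)) : 0 ≤ muGamma M :=
  Real.iSup_nonneg fun _ => hausMNCin_nonneg _ _

lemma muGamma_le_hausMNCin {S M : Set (Ω →ᵇ Y)} (hMS : M ⊆ S) (hM : Bornology.IsBounded M) :
    muGamma M ≤ hausMNCin S M :=
  Real.iSup_le (hausMNC_evalSet_le_hausMNCin hMS hM) (hausMNCin_nonneg S M)

lemma hausMNC_evalSet_le_muGamma {M : Set (Ω →ᵇ Y)} (hM : Bornology.IsBounded M) (x : Ω) :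
    hausMNC (evalSet M x) ≤ muGamma M :=
  le_ciSup ⟨hausMNC M, forall_mem_range.2 (hausMNC_evalSet_le_hausMNCin (subset_univ M) hM)⟩ x

lemma two_mul_mem_omegaXRadii {X M : Set (Ω →ᵇ Y)} {ε : ℝ} (hε : ε ∈ hausRadii X M) :
    2 * ε ∈ omegaXRadii X M := by
  obtain ⟨hε0, F, hF, hFX, hcov⟩ := hε
  obtain ⟨m, φ, rfl⟩ := hF.fin_embedding
  refine ⟨by positivity, 1, _, isPartition_univ, m, φ, fun j => hFX (mem_range_self j), ?_⟩
  intro f hf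
  obtain ⟨-, ⟨j, rfl⟩, hfj⟩ := mem_iUnion₂.1 (hcov hf)
  refine ⟨j, fun _ => diam_le_of_forall_dist_le (by positivity) ?_⟩
  rintro - ⟨x, -, rfl⟩ - ⟨y, -, rfl⟩
  calc dist ((f - φ j) x) ((f - φ j) y) ≤ 2 * ‖f - φ j‖ := dist_le_two_norm _ x y
    _ ≤ 2 * ε := by rw [← dist_eq_norm]; gcongr; exact hfj

lemma omegaXRadii_nonempty {X M : Set (Ω →ᵇ Y)} (hMX : M ⊆ X) (hM : Bornology.IsBounded M) :
    (omegaXRadii X M).Nonempty :=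
  let ⟨_, hε⟩ := hausRadii_nonempty hMX hM
  ⟨_, two_mul_mem_omegaXRadii hε⟩

lemma omegaX_div_two_le_hausMNCin {X M : Set (Ω →ᵇ Y)} (hMX : M ⊆ X)
    (hM : Bornology.IsBounded M) : omegaX X M / 2 ≤ hausMNCin X M :=
  le_csInf (hausRadii_nonempty hMX hM) fun ε hε => by
    have : omegaX X M ≤ 2 * ε := csInf_le ⟨0, fun _ hδ => hδ.1.le⟩ (two_mul_mem_omegaXRadii hε)
    linarith

end FunctionSpace

lemma exists_finite_range_mem_same_piece {Ω ι : Type*} [Finite ι] {A : ι → Set Ω}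
    (hA : ⋃ i, A i = univ) :
    ∃ r : Ω → Ω, (range r).Finite ∧ ∀ x, ∃ i, x ∈ A i ∧ r x ∈ A i := by
  choose idx hidx using iUnion_eq_univ_iff.1 hA
  let p : {i // (A i).Nonempty} → Ω := fun i => i.2.some
  refine ⟨fun x => p ⟨idx x, x, hidx x⟩, (finite_range p).subset (range_comp_subset_range _ p),
    fun x => ⟨idx x, hidx x, Nonempty.some_mem _⟩⟩

lemma exists_boundedContinuousFunction_coe_eq {α β : Type*} [TopologicalSpace α]
    [DiscreteTopology α] [PseudoMetricSpace β] {g : α → β} (hg : Bornology.IsBounded (range g)) :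
    ∃ h : α →ᵇ β, ⇑h = g :=
  let ⟨C, hC⟩ := isBounded_range_iff.1 hg
  ⟨mkOfDiscrete g C hC, rfl⟩

section Upper

variable {Ω Y : Type*} [TopologicalSpace Ω] [DiscreteTopology Ω] [NormedAddCommGroup Y]

lemma hausMNC_le_add_of_dist_le_of_finite_range {M Φ : Set (Ω →ᵇ Y)} (hΦ : Φ.Finite)
    {r : Ω → Ω} (hr : (range r).Finite) {ε₁ ε₂ : ℝ} (hε₁ : 0 < ε₁) (hε₂ : 0 ≤ ε₂)
    (hnet : ∀ x, ∃ F : Set Y, F.Finite ∧ evalSet M x ⊆ ⋃ y ∈ F, closedBall y ε₁)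
    (hosc : ∀ f ∈ M, ∃ φ ∈ Φ, ∀ x, dist ((f - φ) x) ((f - φ) (r x)) ≤ ε₂) :
    hausMNC M ≤ ε₁ + ε₂ := by
  choose F hF hcov using hnet
  have : Finite (range r) := hr.to_subtype
  have hshift : ∀ (φ : Ω →ᵇ Y) (s : range r → Y),
      ∃ c : Ω →ᵇ Y, ⇑c = fun x => s (rangeFactorization r x) - φ (r x) := fun φ s =>
    exists_boundedContinuousFunction_coe_eq ((finite_range fun p : range r => s p - φ p).subset
      (range_comp_subset_range _ _)).isBounded
  choose c hc using hshift
  let T : Set (range r → Y) := univ.pi fun p => F p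
  refine hausMNCin_le_of_mem ⟨by positivity, image2 (fun φ s => φ + c φ s) Φ T,
    hΦ.image2 _ (Finite.pi fun p => hF p), subset_univ _, fun f hf => ?_⟩
  obtain ⟨φ, hφ, hfφ⟩ := hosc f hf
  have hs : ∀ p : range r, ∃ y ∈ F p, f p ∈ closedBall y ε₁ := fun p => by
    simpa only [mem_iUnion₂, exists_prop] using hcov p ⟨f, hf, rfl⟩
  choose s hsF hs using hs
  refine mem_iUnion₂.2 ⟨_, mem_image2_of_mem hφ (fun p _ => hsF p), ?_⟩
  refine (dist_le (by positivity)).2 fun x => ?_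
  have hx : f x - (φ + c φ s) x
      = ((f - φ) x - (f - φ) (r x)) + (f (r x) - s (rangeFactorization r x)) := by
    simp only [coe_add, coe_sub, Pi.add_apply, Pi.sub_apply, hc]
    abel
  rw [dist_eq_norm, hx, add_comm ε₁]
  exact (norm_add_le _ _).trans (add_le_add (by rw [← dist_eq_norm]; exact hfφ x)
    (by rw [← dist_eq_norm]; exact hs (rangeFactorization r x)))

lemma hausMNC_le_muGamma_add_of_mem_omegaXRadii {X M : Set (Ω →ᵇ Y)}
    (hM : Bornology.IsBounded M) {ε : ℝ} (hε : ε ∈ omegaXRadii X M) :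
    hausMNC M ≤ muGamma M + ε := by
  obtain ⟨hε0, n, A, hA, m, φ, -, hφ⟩ := hε
  obtain ⟨r, hr, hrA⟩ := exists_finite_range_mem_same_piece hA.1
  refine le_of_forall_pos_le_add fun δ hδ => ?_
  have hnet : ∀ x, ∃ F : Set Y, F.Finite ∧ evalSet M x ⊆ ⋃ y ∈ F, closedBall y (muGamma M + δ) :=
    fun x => by
      obtain ⟨-, F, hF, -, hcov⟩ := mem_hausRadii_of_hausMNCin_lt
        (hausRadii_nonempty (subset_univ _) (isBounded_evalSet hM x))
        ((hausMNC_evalSet_le_muGamma hM x).trans_lt (lt_add_of_pos_right _ hδ))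
      exact ⟨F, hF, hcov⟩
  have hosc : ∀ f ∈ M, ∃ ψ ∈ range φ, ∀ x, dist ((f - ψ) x) ((f - ψ) (r x)) ≤ ε := by
    intro f hf
    obtain ⟨j, hj⟩ := hφ f hf
    refine ⟨φ j, mem_range_self j, fun x => ?_⟩
    obtain ⟨i, hx, hrx⟩ := hrA x
    exact (dist_le_diam_of_mem ((f - φ j).isBounded_range.subset (image_subset_range _ _))
      (mem_image_of_mem _ hx) (mem_image_of_mem _ hrx)).trans (hj i)
  have := hausMNC_le_add_of_dist_le_of_finite_range (finite_range φ) hr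
    (by linarith [muGamma_nonneg M]) hε0.le hnet hosc
  linarith

lemma hausMNC_le_muGamma_add_omegaX {X M : Set (Ω →ᵇ Y)} (hMX : M ⊆ X)
    (hM : Bornology.IsBounded M) : hausMNC M ≤ muGamma M + omegaX X M := by
  have : hausMNC M - muGamma M ≤ omegaX X M :=
    le_csInf (omegaXRadii_nonempty hMX hM) fun ε hε => by
      linarith [hausMNC_le_muGamma_add_of_mem_omegaXRadii hM hε]
  linarith

end Upper

theorem stmt16_general {Ω Y : Type*} [TopologicalSpace Ω] [DiscreteTopology Ω]
    [NormedAddCommGroup Y] [NormedSpace ℝ Y]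
    (X : Submodule ℝ (Ω →ᵇ Y))
    (M : Set (Ω →ᵇ Y)) (hMX : M ⊆ (X : Set (Ω →ᵇ Y))) (hM : Bornology.IsBounded M) :
    max (muGamma M) (omegaX (X : Set (Ω →ᵇ Y)) M / 2) ≤ hausMNCin (X : Set (Ω →ᵇ Y)) M ∧
      hausMNCin (X : Set (Ω →ᵇ Y)) M ≤ 2 * (muGamma M + omegaX (X : Set (Ω →ᵇ Y)) M) := by
  refine ⟨max_le (muGamma_le_hausMNCin hMX hM) (omegaX_div_two_le_hausMNCin hMX hM), ?_⟩
  calc hausMNCin (X : Set (Ω →ᵇ Y)) M ≤ 2 * hausMNC M := hausMNCin_le_two_mul_hausMNC hMX hM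
    _ ≤ 2 * (muGamma M + omegaX (X : Set (Ω →ᵇ Y)) M) := by
      gcongr
      exact hausMNC_le_muGamma_add_omegaX hMX hM

theorem stmt16 {Ω Y : Type*} [TopologicalSpace Ω] [DiscreteTopology Ω] [Nonempty Ω]
    [NormedAddCommGroup Y] [NormedSpace ℝ Y] [CompleteSpace Y]
    (X : Submodule ℝ (Ω →ᵇ Y)) (hX : IsClosed (X : Set (Ω →ᵇ Y)))
    (M : Set (Ω →ᵇ Y)) (hMX : M ⊆ (X : Set (Ω →ᵇ Y))) (hM : Bornology.IsBounded M) :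
    max (muGamma M) (omegaX (X : Set (Ω →ᵇ Y)) M / 2) ≤ hausMNCin (X : Set (Ω →ᵇ Y)) M ∧
      hausMNCin (X : Set (Ω →ᵇ Y)) M ≤ 2 * (muGamma M + omegaX (X : Set (Ω →ᵇ Y)) M) :=
  stmt16_general X M hMX hM
end
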